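/- For every prime number p, the additive group of the p-adic numbers ℚ_p is self-dual: there exists an isomorphism of topological groups between ℚ_p and its Pontryagin dual, i.e. the group of continuous additive characters ℚ_p → S¹ equipped with the compact-open topology. Explicitly, the map sending y ∈ ℚ_p to the character x ↦ e^{2πi{yx}_p} (where {·}_p denotes the p-adic fractional part) is such an isomorphism. -/

import Mathlib

/-!
The character `ψ z = e^{2πi{z}_p}` is well defined because two approximations `a / p^n` of `z`
modulo `ℤ_p` differ by an element of `ℤ[1/p] ∩ ℤ_p = ℤ`, and its kernel is exactly `ℤ_p`; so
`y ↦ ψ (y ·)` is a continuous injective homomorphism `ℚ_p → ℚ_p^`. Since the circle has no small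
subgroups, a character `χ` is trivial on some `p^k ℤ_p`; on `p^{-N} ℤ_p` it is then determined by
the `p^{N+k}`-th root of unity `χ (p^{-N})`, which `ψ (y ·)` matches for some `y ∈ p^{-k} ℤ_p`.
These `y` form a decreasing sequence of nonempty compact sets, and a point of their intersection
gives `χ = ψ (y ·)`. The inverse map is continuous by the open mapping theorem, as the dual of a
locally compact group is locally compact.
-/

open Real Multiplicative Topology

theorem Circle.exists_eq_exp_of_pow_eq_one {u : Circle} {n : ℕ} (hn : n ≠ 0) (h : u ^ n = 1) :
    ∃ b : ℤ, u = Circle.exp (2 * π * (b / n)) := by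
  obtain ⟨t, rfl⟩ := Circle.exp_surjective u
  rw [← Circle.exp_natCast_mul, Circle.exp_eq_one] at h
  obtain ⟨b, hb⟩ := h
  refine ⟨b, congrArg Circle.exp ?_⟩
  have hn' : (n : ℝ) ≠ 0 := mod_cast hn
  field_simp
  linear_combination hb

theorem PontryaginDual.exists_openAddSubgroup_forall_eq_one {A : Type*} [AddGroup A]
    [TopologicalSpace A] [NonarchimedeanAddGroup A] (χ : PontryaginDual (Multiplicative A)) :
    ∃ V : OpenAddSubgroup A, ∀ x ∈ V, χ (ofAdd x) = 1 := by
  have h1 : (1 : Circle) ∈ Circle.centeredArc (π / 2) := by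
    rw [Circle.mem_centeredArc (by linarith [pi_pos])]
    simp [pi_pos]
  have hU : (fun x : A ↦ χ (ofAdd x)) ⁻¹' Circle.centeredArc (π / 2) ∈ 𝓝 0 :=
    ((map_continuous χ).comp continuous_ofAdd).continuousAt.preimage_mem_nhds <| by
      simpa using (Circle.isOpen_centeredArc _).mem_nhds h1
  obtain ⟨V, hV⟩ := NonarchimedeanAddGroup.is_nonarchimedean _ hU
  refine ⟨V, fun x hx ↦ Circle.eq_one_of_forall_pow_mem_centeredArc_pi_div_two fun n _ ↦ ?_⟩
  rw [← map_pow, ← ofAdd_nsmul]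
  exact hV (V.nsmul_mem hx n)

namespace Padic

variable {p : ℕ} [hp : Fact p.Prime]

theorem exists_nat_lt_pow_norm_sub_le {x : ℚ_[p]} (hx : ‖x‖ ≤ 1) (n : ℕ) :
    ∃ c < p ^ n, ‖x - c‖ ≤ (p : ℝ) ^ (-n : ℤ) := by
  let x' : ℤ_[p] := ⟨x, hx⟩
  refine ⟨x'.appr n, x'.appr_lt n, ?_⟩
  simpa [PadicInt.norm_def] using
    (x' - x'.appr n).norm_le_pow_iff_mem_span_pow n |>.mpr (x'.appr_spec n)

theorem exists_norm_sub_div_pow_le_one (z : ℚ_[p]) :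
    ∃ an : ℕ × ℕ, an.1 < p ^ an.2 ∧ ‖z - an.1 / (p : ℚ_[p]) ^ an.2‖ ≤ 1 := by
  have hp1 : (1 : ℝ) < p := mod_cast hp.out.one_lt
  obtain ⟨n, hn⟩ := pow_unbounded_of_one_lt ‖z‖ hp1
  have hzn : ‖z * (p : ℚ_[p]) ^ n‖ ≤ 1 := by
    rw [norm_mul, norm_p_pow, zpow_neg, zpow_natCast, ← div_eq_mul_inv,
      div_le_one (by positivity)]
    exact hn.le
  obtain ⟨a, ha, hza⟩ := exists_nat_lt_pow_norm_sub_le hzn n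
  refine ⟨(a, n), ha, ?_⟩
  have hp0 : (p : ℚ_[p]) ^ n ≠ 0 := pow_ne_zero _ (mod_cast hp.out.ne_zero)
  rwa [show z - a / (p : ℚ_[p]) ^ n = (z * p ^ n - a) * ((p : ℚ_[p]) ^ n)⁻¹ by field_simp,
    norm_mul, norm_inv, norm_p_pow, mul_inv_le_iff₀ (zpow_pos (by positivity) _), one_mul]

theorem pow_dvd_of_norm_intCast_div_pow_le_one {a : ℤ} {n : ℕ}
    (h : ‖(a : ℚ_[p]) / p ^ n‖ ≤ 1) : (p : ℤ) ^ n ∣ a := by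
  have hp_pos : (0 : ℝ) < p := mod_cast hp.out.pos
  rwa [← norm_int_le_pow_iff_dvd, ← div_le_one (zpow_pos hp_pos _), ← norm_p_pow, ← norm_div]

theorem circleExp_eq_of_norm_sub_le_one {a b : ℤ} {n m : ℕ}
    (h : ‖(a : ℚ_[p]) / p ^ n - b / p ^ m‖ ≤ 1) :
    Circle.exp (2 * π * (a / p ^ n)) = Circle.exp (2 * π * (b / p ^ m)) := by
  have hp0 : (p : ℚ_[p]) ≠ 0 := mod_cast hp.out.ne_zero
  have hpR : (p : ℝ) ≠ 0 := mod_cast hp.out.ne_zero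
  have hdiff : (a : ℚ_[p]) / p ^ n - b / p ^ m =
      ((a * p ^ m - b * p ^ n : ℤ) : ℚ_[p]) / p ^ (n + m) := by
    field_simp
    push_cast
    ring
  obtain ⟨c, hc⟩ := pow_dvd_of_norm_intCast_div_pow_le_one (hdiff ▸ h)
  have hc' : (a : ℝ) / p ^ n = b / p ^ m + c := by
    have hcR : (a : ℝ) * p ^ m - b * p ^ n = p ^ n * p ^ m * c := by
      rw [← pow_add]; exact_mod_cast hc
    field_simp
    linear_combination hcR
  rw [hc', mul_add, Circle.exp_add, Circle.exp_two_pi_mul_int, mul_one]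

noncomputable def expFract (z : ℚ_[p]) : Circle :=
  let an := (exists_norm_sub_div_pow_le_one z).choose
  Circle.exp (2 * π * (an.1 / p ^ an.2))

theorem expFract_eq {z : ℚ_[p]} {a : ℤ} {n : ℕ} (h : ‖z - a / (p : ℚ_[p]) ^ n‖ ≤ 1) :
    expFract z = Circle.exp (2 * π * (a / p ^ n)) := by
  have hz := (exists_norm_sub_div_pow_le_one z).choose_spec.2
  rw [expFract]
  generalize (exists_norm_sub_div_pow_le_one z).choose = bm at hz ⊢
  obtain ⟨b, m⟩ := bm
  have hclose : ‖((b : ℤ) : ℚ_[p]) / p ^ m - a / p ^ n‖ ≤ 1 := by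
    rw [← dist_eq_norm, Int.cast_natCast]
    exact (dist_triangle_max _ z _).trans
      (max_le (by rwa [dist_comm, dist_eq_norm]) (by rwa [dist_eq_norm]))
  simpa using circleExp_eq_of_norm_sub_le_one hclose

noncomputable def stdAddChar : AddChar ℚ_[p] Circle where
  toFun := expFract
  map_zero_eq_one' := by simpa using expFract_eq (p := p) (z := 0) (a := 0) (n := 0) (by simp)
  map_add_eq_mul' z w := by
    obtain ⟨⟨a, n⟩, -, hz⟩ := exists_norm_sub_div_pow_le_one z
    obtain ⟨⟨b, m⟩, -, hw⟩ := exists_norm_sub_div_pow_le_one w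
    have hp0 : (p : ℚ_[p]) ≠ 0 := mod_cast hp.out.ne_zero
    have hpR : (p : ℝ) ≠ 0 := mod_cast hp.out.ne_zero
    have hsum : z + w - ((a * p ^ m + b * p ^ n : ℤ) : ℚ_[p]) / p ^ (n + m) =
        (z - a / p ^ n) + (w - b / p ^ m) := by
      field_simp
      push_cast
      ring
    have hzw := hsum ▸ (IsUltrametricDist.norm_add_le_max _ _).trans (max_le hz hw)
    rw [expFract_eq hzw, expFract_eq (a := a) (by simpa using hz),
      expFract_eq (a := b) (by simpa using hw), ← Circle.exp_add]
    congr 1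
    field_simp
    push_cast
    ring

theorem stdAddChar_apply {z : ℚ_[p]} {a : ℤ} {n : ℕ} (h : ‖z - a / (p : ℚ_[p]) ^ n‖ ≤ 1) :
    stdAddChar z = Circle.exp (2 * π * (a / p ^ n)) :=
  expFract_eq h

theorem stdAddChar_eq_one_iff {z : ℚ_[p]} : stdAddChar z = 1 ↔ ‖z‖ ≤ 1 := by
  refine ⟨fun h ↦ ?_, fun h ↦ by simpa using stdAddChar_apply (a := 0) (n := 0) (by simpa using h)⟩
  obtain ⟨⟨a, n⟩, -, hz⟩ := exists_norm_sub_div_pow_le_one z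
  rw [stdAddChar_apply (a := a) (by simpa using hz), Circle.exp_eq_one] at h
  obtain ⟨k, hk⟩ := h
  have hp0 : (p : ℚ_[p]) ≠ 0 := mod_cast hp.out.ne_zero
  have hpR : (p : ℝ) ≠ 0 := mod_cast hp.out.ne_zero
  have hak : (a : ℤ) = p ^ n * k := by
    field_simp at hk
    exact_mod_cast hk
  have hint : (a : ℚ_[p]) / p ^ n = k := by
    field_simp
    exact_mod_cast hak
  calc ‖z‖ = ‖(z - a / p ^ n) + k‖ := by rw [← hint, sub_add_cancel]
    _ ≤ 1 := (IsUltrametricDist.norm_add_le_max _ _).trans (max_le hz (norm_int_le_one k))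

theorem continuous_stdAddChar : Continuous (stdAddChar : ℚ_[p] → Circle) := by
  refine IsLocallyConstant.continuous <| (IsLocallyConstant.iff_eventually_eq _).2 fun z ↦ ?_
  filter_upwards [Metric.closedBall_mem_nhds z one_pos] with w hw
  rw [← sub_add_cancel w z, AddChar.map_add_eq_mul,
    stdAddChar_eq_one_iff.2 (by rwa [← dist_eq_norm]), one_mul]

theorem exists_forall_norm_le_pow_eq_one (χ : PontryaginDual (Multiplicative ℚ_[p])) :
    ∃ k : ℕ, ∀ x : ℚ_[p], ‖x‖ ≤ (p : ℝ) ^ (-k : ℤ) → χ (ofAdd x) = 1 := by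
  obtain ⟨V, hV⟩ := PontryaginDual.exists_openAddSubgroup_forall_eq_one χ
  obtain ⟨ε, hε, hball⟩ := Metric.mem_nhds_iff.1 V.mem_nhds_zero
  obtain ⟨k, hk⟩ := PadicInt.exists_pow_neg_lt p hε
  exact ⟨k, fun x hx ↦ hV x (hball (by simpa using hx.trans_lt hk))⟩

theorem exists_norm_sub_nsmul_zpow_le {x : ℚ_[p]} {N : ℕ} (hx : ‖x‖ ≤ (p : ℝ) ^ (N : ℤ))
    (k : ℕ) : ∃ c : ℕ, ‖x - c • (p : ℚ_[p]) ^ (-N : ℤ)‖ ≤ (p : ℝ) ^ (-k : ℤ) := by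
  have hp0 : (p : ℚ_[p]) ≠ 0 := mod_cast hp.out.ne_zero
  have hp_pos : (0 : ℝ) < p := mod_cast hp.out.pos
  have hxN : ‖x * (p : ℚ_[p]) ^ N‖ ≤ 1 := by
    rwa [norm_mul, norm_p_pow, zpow_neg, ← div_eq_mul_inv, div_le_one (zpow_pos hp_pos _)]
  obtain ⟨c, -, hc⟩ := exists_nat_lt_pow_norm_sub_le hxN (N + k)
  refine ⟨c, ?_⟩
  rw [show x - c • (p : ℚ_[p]) ^ (-N : ℤ) = (x * p ^ N - c) * p ^ (-N : ℤ) by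
    rw [nsmul_eq_mul, zpow_neg, zpow_natCast]; field_simp, norm_mul, norm_p_zpow, neg_neg]
  calc ‖x * (p : ℚ_[p]) ^ N - c‖ * (p : ℝ) ^ (N : ℤ) ≤ p ^ (-(N + k : ℕ) : ℤ) * p ^ (N : ℤ) := by
        gcongr
    _ = p ^ (-k : ℤ) := by rw [← zpow_add₀ hp_pos.ne']; push_cast; ring_nf

theorem apply_eq_of_apply_zpow_eq {χ₁ χ₂ : PontryaginDual (Multiplicative ℚ_[p])} {k N : ℕ}
    (h₁ : ∀ x : ℚ_[p], ‖x‖ ≤ (p : ℝ) ^ (-k : ℤ) → χ₁ (ofAdd x) = 1)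
    (h₂ : ∀ x : ℚ_[p], ‖x‖ ≤ (p : ℝ) ^ (-k : ℤ) → χ₂ (ofAdd x) = 1)
    (hN : χ₁ (ofAdd ((p : ℚ_[p]) ^ (-N : ℤ))) = χ₂ (ofAdd ((p : ℚ_[p]) ^ (-N : ℤ))))
    {x : ℚ_[p]} (hx : ‖x‖ ≤ (p : ℝ) ^ (N : ℤ)) : χ₁ (ofAdd x) = χ₂ (ofAdd x) := by
  obtain ⟨c, hc⟩ := exists_norm_sub_nsmul_zpow_le hx k
  rw [← sub_add_cancel x (c • _), ofAdd_add, map_mul, map_mul, h₁ _ hc, h₂ _ hc, ofAdd_nsmul,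
    map_pow, map_pow, hN]

noncomputable def toPontryaginDual :
    Multiplicative ℚ_[p] →* PontryaginDual (Multiplicative ℚ_[p]) :=
  MonoidHom.mk' (fun y ↦ ⟨(stdAddChar.mulShift y.toAdd).toMonoidHom,
      continuous_stdAddChar.comp (continuous_const.mul continuous_toAdd)⟩)
    fun y z ↦ PontryaginDual.ext fun x ↦ by
      change stdAddChar ((y.toAdd + z.toAdd) * x.toAdd) =
        stdAddChar (y.toAdd * x.toAdd) * stdAddChar (z.toAdd * x.toAdd)
      rw [add_mul, AddChar.map_add_eq_mul]

theorem toPontryaginDual_apply (y x : ℚ_[p]) :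
    toPontryaginDual (ofAdd y) (ofAdd x) = stdAddChar (y * x) :=
  rfl

theorem continuous_toPontryaginDual : Continuous (toPontryaginDual (p := p)) :=
  ContinuousMonoidHom.continuous_of_continuous_uncurry _ <| continuous_stdAddChar.comp <|
    (continuous_toAdd.comp continuous_fst).mul (continuous_toAdd.comp continuous_snd)

theorem toPontryaginDual_injective : Function.Injective (toPontryaginDual (p := p)) := by
  refine (injective_iff_map_eq_one _).2 fun y hy ↦ ?_
  obtain ⟨y, rfl⟩ := ofAdd.surjective y
  rw [ofAdd_eq_one]
  by_contra hy0
  have h := DFunLike.congr_fun hy (ofAdd (y⁻¹ * (p : ℚ_[p])⁻¹))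
  rw [toPontryaginDual_apply, mul_inv_cancel_left₀ hy0, PontryaginDual.one_apply,
    stdAddChar_eq_one_iff, norm_inv, norm_p, inv_inv] at h
  exact h.not_gt (mod_cast hp.out.one_lt)

theorem exists_toPontryaginDual_eq_of_norm_le_pow (χ : PontryaginDual (Multiplicative ℚ_[p]))
    {k : ℕ} (hk : ∀ x : ℚ_[p], ‖x‖ ≤ (p : ℝ) ^ (-k : ℤ) → χ (ofAdd x) = 1) (N : ℕ) :
    ∃ y : ℚ_[p], ‖y‖ ≤ (p : ℝ) ^ (k : ℤ) ∧ ∀ x : ℚ_[p], ‖x‖ ≤ (p : ℝ) ^ (N : ℤ) →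
      toPontryaginDual (ofAdd y) (ofAdd x) = χ (ofAdd x) := by
  have hp0 : (p : ℚ_[p]) ≠ 0 := mod_cast hp.out.ne_zero
  have hp_pos : (0 : ℝ) < p := mod_cast hp.out.pos
  have hu : χ (ofAdd ((p : ℚ_[p]) ^ (-N : ℤ))) ^ p ^ (N + k) = 1 := by
    rw [← map_pow, ← ofAdd_nsmul]
    refine hk _ (le_of_eq ?_)
    rw [nsmul_eq_mul, Nat.cast_pow, ← zpow_natCast, ← zpow_add₀ hp0, norm_p_zpow]
    push_cast
    ring_nf
  obtain ⟨b, hb⟩ := Circle.exists_eq_exp_of_pow_eq_one (pow_ne_zero _ hp.out.ne_zero) hu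
  have hy : ‖(b : ℚ_[p]) / p ^ k‖ ≤ (p : ℝ) ^ (k : ℤ) := by
    rw [norm_div, norm_p_pow, div_le_iff₀ (zpow_pos hp_pos _), ← zpow_add₀ hp_pos.ne',
      add_neg_cancel, zpow_zero]
    exact norm_int_le_one b
  refine ⟨b / p ^ k, hy, fun x hx ↦ apply_eq_of_apply_zpow_eq (fun x hx ↦ ?_) hk ?_ hx⟩
  · rw [toPontryaginDual_apply, stdAddChar_eq_one_iff, norm_mul]
    calc _ ≤ (p : ℝ) ^ (k : ℤ) * p ^ (-k : ℤ) := mul_le_mul hy hx (norm_nonneg _) (by positivity)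
      _ = 1 := by rw [← zpow_add₀ hp_pos.ne', add_neg_cancel, zpow_zero]
  · have hexact : (b : ℚ_[p]) / p ^ k * p ^ (-N : ℤ) = b / p ^ (N + k) := by
      rw [zpow_neg, zpow_natCast, pow_add]
      field_simp
    rw [toPontryaginDual_apply, hb,
      stdAddChar_apply (by rw [hexact, sub_self, norm_zero]; exact zero_le_one)]
    push_cast
    ring_nf

theorem toPontryaginDual_surjective : Function.Surjective (toPontryaginDual (p := p)) := by
  intro χ
  have hp1 : (1 : ℝ) < p := mod_cast hp.out.one_lt
  obtain ⟨k, hk⟩ := exists_forall_norm_le_pow_eq_one χ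
  let T (N : ℕ) : Set ℚ_[p] := Metric.closedBall 0 (p ^ (k : ℤ)) ∩
    {y | ∀ x : ℚ_[p], ‖x‖ ≤ (p : ℝ) ^ (N : ℤ) →
      toPontryaginDual (ofAdd y) (ofAdd x) = χ (ofAdd x)}
  have hT_closed (N : ℕ) : IsClosed (T N) := by
    refine Metric.isClosed_closedBall.inter ?_
    simp only [Set.ofPred_forall]
    exact isClosed_iInter fun x ↦ isClosed_iInter fun _ ↦ isClosed_eq
      (continuous_stdAddChar.comp (continuous_id.mul continuous_const)) continuous_const
  have hT_anti (N : ℕ) : T (N + 1) ⊆ T N := fun y hy ↦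
    ⟨hy.1, fun x hx ↦ hy.2 x (hx.trans (zpow_le_zpow_right₀ hp1.le (by omega)))⟩
  have hT_nonempty (N : ℕ) : (T N).Nonempty := by
    obtain ⟨y, hy, hyχ⟩ := exists_toPontryaginDual_eq_of_norm_le_pow χ hk N
    exact ⟨y, by simpa using hy, hyχ⟩
  obtain ⟨y, hy⟩ := IsCompact.nonempty_iInter_of_sequence_nonempty_isCompact_isClosed T hT_anti
    hT_nonempty ((isCompact_closedBall _ _).of_isClosed_subset (hT_closed 0)
      Set.inter_subset_left) hT_closed
  refine ⟨ofAdd y, PontryaginDual.ext fun x ↦ ?_⟩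
  obtain ⟨N, hN⟩ := pow_unbounded_of_one_lt ‖x.toAdd‖ hp1
  exact (Set.mem_iInter.1 hy N).2 x.toAdd (by simpa using hN.le)

noncomputable def homeomorphPontryaginDual : ℚ_[p] ≃ₜ PontryaginDual (Multiplicative ℚ_[p]) :=
  (ofAdd.trans (Equiv.ofBijective _ ⟨toPontryaginDual_injective, toPontryaginDual_surjective⟩))
    |>.toHomeomorphOfContinuousOpen (continuous_toPontryaginDual.comp continuous_ofAdd) <|
      (toPontryaginDual.isOpenMap_of_sigmaCompact toPontryaginDual_surjective
        continuous_toPontryaginDual).comp isOpenMap_ofAdd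

theorem homeomorphPontryaginDual_add (y z : ℚ_[p]) :
    homeomorphPontryaginDual (y + z) = homeomorphPontryaginDual y * homeomorphPontryaginDual z :=
  map_mul toPontryaginDual (ofAdd y) (ofAdd z)

theorem homeomorphPontryaginDual_apply (y x : ℚ_[p]) :
    homeomorphPontryaginDual y (ofAdd x) = stdAddChar (y * x) :=
  rfl

end Padic

theorem padic_self_dual (p : ℕ) [Fact p.Prime] :
    ∃ e : ℚ_[p] ≃ₜ PontryaginDual (Multiplicative ℚ_[p]),
      (∀ y z : ℚ_[p], e (y + z) = e y * e z) ∧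
      ∀ y x : ℚ_[p], ∃ a n : ℕ, a < p ^ n ∧
        ‖y * x - (((a : ℚ) / (p : ℚ) ^ n : ℚ) : ℚ_[p])‖ ≤ 1 ∧
        ((e y (Multiplicative.ofAdd x) : Circle) : ℂ) =
          Complex.exp (2 * Real.pi * Complex.I * ((a : ℂ) / (p : ℂ) ^ n)) := by
  refine ⟨Padic.homeomorphPontryaginDual, Padic.homeomorphPontryaginDual_add, fun y x ↦ ?_⟩
  obtain ⟨⟨a, n⟩, ha, hyx⟩ := Padic.exists_norm_sub_div_pow_le_one (y * x)
  refine ⟨a, n, ha, by simpa using hyx, ?_⟩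
  rw [Padic.homeomorphPontryaginDual_apply, Padic.stdAddChar_apply (a := a) (by simpa using hyx),
    Circle.coe_exp]
  push_cast
  ring_nf
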